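/- For every m ≥ 1 and χ a multiplicative character of F_{2^{2m}} of exact order 3 (χ(0) = 0), the Gauss sum G(χ) = Σ_{y ∈ F_{2^{2m}}} χ(y) (-1)^{Tr(y)} equals -(-2)^m. -/

import Mathlib

noncomputable def cubeOmega : ℂ := ⟨-1/2, Real.sqrt 3 / 2⟩

lemma cubeOmega_sq : cubeOmega ^ 2 = ⟨-1/2, -(Real.sqrt 3 / 2)⟩ := by
  have h3 : Real.sqrt 3 * Real.sqrt 3 = 3 := Real.mul_self_sqrt (by norm_num)
  rw [pow_two]
  apply Complex.ext <;> simp [cubeOmega, Complex.mul_re, Complex.mul_im] <;> nlinarith [h3]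

lemma cubeOmega_sum : 1 + cubeOmega + cubeOmega ^ 2 = 0 := by
  rw [cubeOmega_sq]
  apply Complex.ext <;> simp [cubeOmega] <;> ring

lemma cubeOmega_cube : cubeOmega ^ 3 = 1 := by
  have h3 : Real.sqrt 3 * Real.sqrt 3 = 3 := Real.mul_self_sqrt (by norm_num)
  have : cubeOmega ^ 3 = cubeOmega * cubeOmega ^ 2 := by ring
  rw [this, cubeOmega_sq]
  apply Complex.ext <;> simp [cubeOmega, Complex.mul_re, Complex.mul_im] <;> nlinarith [h3]

lemma sqrt3_ne : Real.sqrt 3 / 2 ≠ 0 := by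
  have : (0:ℝ) < Real.sqrt 3 := Real.sqrt_pos.mpr (by norm_num)
  positivity

lemma cubeOmega_ne_one : cubeOmega ≠ 1 := by
  intro h
  have := congrArg Complex.im h
  simp [cubeOmega] at this

lemma cubeOmega_sq_ne_one : cubeOmega ^ 2 ≠ 1 := by
  intro h
  rw [cubeOmega_sq] at h
  have := congrArg Complex.im h
  simp at this

lemma cubeOmega_ne_sq : cubeOmega ≠ cubeOmega ^ 2 := by
  intro h
  rw [cubeOmega_sq] at h
  have := congrArg Complex.im h
  simp [cubeOmega] at this
  have h2 : Real.sqrt 3 / 2 = 0 := by linarith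
  exact sqrt3_ne h2

lemma cubeOmega_ne_zero : cubeOmega ≠ 0 := by
  intro h
  have := cubeOmega_cube
  rw [h] at this; simp at this

lemma cube_root_cases {z : ℂ} (hz : z ^ 3 = 1) :
    z = 1 ∨ z = cubeOmega ∨ z = cubeOmega ^ 2 := by
  have key : (z - 1) * ((z - cubeOmega) * (z - cubeOmega ^ 2)) = 0 := by
    linear_combination hz + (cubeOmega * z - z ^ 2) * cubeOmega_sum - cubeOmega_cube
  rcases mul_eq_zero.mp key with h | h
  · left; exact sub_eq_zero.mp h
  · rcases mul_eq_zero.mp h with h | h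
    · right; left; exact sub_eq_zero.mp h
    · right; right; exact sub_eq_zero.mp h

/-- Absolute trace of `F_{2^s}` to `F_2`: `Tr(x) = x + x^2 + ... + x^(2^(s-1))`. -/
def fieldTrace {F : Type*} [Field F] (s : ℕ) (x : F) : F :=
  ∑ i ∈ Finset.range s, x ^ (2 ^ i)

section TraceLemmas

variable {F : Type*} [Field F] [Fintype F] [DecidableEq F]

lemma char_two_of_card (m : ℕ) (hm : 1 ≤ m) (hcard : Fintype.card F = 2 ^ (2 * m)) :
    CharP F 2 := by
  have h0 : ((Fintype.card F : ℕ) : F) = 0 := Nat.cast_card_eq_zero F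
  rw [hcard] at h0
  push_cast at h0
  have h2 : (2 : F) = 0 := by
    have := pow_eq_zero_iff (n := 2 * m) (by omega) |>.mp h0
    exact this
  have hdvd : ringChar F ∣ 2 := ringChar.dvd (by exact_mod_cast h2)
  have hprime : (ringChar F).Prime := CharP.char_is_prime F (ringChar F)
  have : ringChar F = 2 := ((Nat.prime_dvd_prime_iff_eq hprime Nat.prime_two).mp hdvd)
  rw [← this]
  exact ringChar.charP F

variable [CharP F 2]

lemma fieldTrace_add (s : ℕ) (x y : F) :
    fieldTrace s (x + y) = fieldTrace s x + fieldTrace s y := by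
  unfold fieldTrace
  rw [← Finset.sum_add_distrib]
  exact Finset.sum_congr rfl fun i _ => add_pow_char_pow ..

lemma fieldTrace_zero (s : ℕ) : fieldTrace s (0 : F) = 0 := by
  unfold fieldTrace
  simp [zero_pow (pow_ne_zero _ (two_ne_zero))]

lemma fieldTrace_sq (m : ℕ) (hcard : Fintype.card F = 2 ^ (2 * m)) (x : F) :
    fieldTrace (2 * m) (x ^ 2) = fieldTrace (2 * m) x := by
  unfold fieldTrace
  have h1 : ∀ i : ℕ, (x ^ 2) ^ (2 ^ i) = x ^ (2 ^ (i + 1)) := by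
    intro i; rw [← pow_mul, pow_succ, mul_comm (2 ^ i) 2, pow_mul]
  calc ∑ i ∈ Finset.range (2 * m), (x ^ 2) ^ 2 ^ i
      = ∑ i ∈ Finset.range (2 * m), x ^ 2 ^ (i + 1) := by
        exact Finset.sum_congr rfl fun i _ => h1 i
    _ = (∑ i ∈ Finset.range (2 * m + 1), x ^ 2 ^ i) - x ^ 2 ^ 0 := by
        rw [Finset.sum_range_succ']; ring
    _ = (∑ i ∈ Finset.range (2 * m), x ^ 2 ^ i) + x ^ 2 ^ (2 * m) - x := by
        rw [Finset.sum_range_succ]; ring_nf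
    _ = ∑ i ∈ Finset.range (2 * m), x ^ 2 ^ i := by
        have : x ^ 2 ^ (2 * m) = x := by rw [← hcard]; exact FiniteField.pow_card x
        rw [this]; ring

lemma fieldTrace_zero_or_one (m : ℕ) (hcard : Fintype.card F = 2 ^ (2 * m)) (x : F) :
    fieldTrace (2 * m) x = 0 ∨ fieldTrace (2 * m) x = 1 := by
  have hsq : fieldTrace (2 * m) x ^ 2 = fieldTrace (2 * m) x := by
    have : fieldTrace (2 * m) x ^ 2 = fieldTrace (2 * m) (x ^ 2) := by
      unfold fieldTrace
      rw [sum_pow_char]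
      exact Finset.sum_congr rfl fun i _ => by
        rw [← pow_mul, ← pow_mul, mul_comm (2^i) 2]
    rw [this, fieldTrace_sq m hcard]
  have : fieldTrace (2 * m) x * (fieldTrace (2 * m) x - 1) = 0 := by
    rw [mul_sub, ← pow_two, hsq]; ring
  rcases mul_eq_zero.mp this with h | h
  · exact Or.inl h
  · exact Or.inr (by linear_combination h)

lemma fieldTrace_exists_ne_zero (m : ℕ) (hm : 1 ≤ m) (hcard : Fintype.card F = 2 ^ (2 * m)) :
    ∃ x : F, fieldTrace (2 * m) x ≠ 0 := by
  set p : Polynomial F := ∑ i ∈ Finset.range (2 * m), Polynomial.X ^ (2 ^ i) with hp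
  have heval : ∀ x : F, p.eval x = fieldTrace (2 * m) x := by
    intro x; rw [hp]; simp [fieldTrace, Polynomial.eval_finset_sum]
  have hpne : p ≠ 0 := by
    intro h
    have hc : p.coeff (2 ^ (2 * m - 1)) = 1 := by
      rw [hp, Polynomial.finset_sum_coeff]
      rw [Finset.sum_eq_single (2 * m - 1)]
      · simp
      · intro i hi hne
        rw [Polynomial.coeff_X_pow]
        have : ¬ (2 ^ (2*m-1) = 2 ^ i) := fun hh =>
          hne ((Nat.pow_right_injective (le_refl 2) hh).symm)
        simp [this]
      · intro habs
        exact absurd (Finset.mem_range.mpr (by omega)) habs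
    rw [h] at hc; simp at hc
  have hdeg : p.natDegree < Fintype.card F := by
    have h1 : p.natDegree ≤ 2 ^ (2 * m - 1) := by
      apply Polynomial.natDegree_sum_le_of_forall_le
      intro i hi
      rw [Polynomial.natDegree_X_pow]
      exact Nat.pow_le_pow_right (by norm_num) (by
        have := Finset.mem_range.mp hi; omega)
    rw [hcard]
    calc p.natDegree ≤ 2 ^ (2*m-1) := h1
      _ < 2 ^ (2*m) := Nat.pow_lt_pow_right (by norm_num) (by omega)
  obtain ⟨r, hr⟩ := Polynomial.exists_eval_ne_zero_of_natDegree_lt_card p hpne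
    (by rw [Cardinal.mk_fintype]; exact_mod_cast hdeg)
  exact ⟨r, by rwa [heval] at hr⟩

lemma sq_bijective : Function.Bijective (fun x : F => x ^ 2) := by
  rw [Fintype.bijective_iff_injective_and_card]
  refine ⟨?_, rfl⟩
  intro a b hab
  simp only at hab
  have : (a + b) ^ 2 = 0 := by
    rw [add_pow_char (p := 2), hab]
    exact CharTwo.add_self_eq_zero _
  have h := pow_eq_zero_iff (n := 2) (by norm_num) |>.mp this
  have : a = -b := by linear_combination h
  rwa [CharTwo.neg_eq] at this

end TraceLemmas


lemma int_pow_two_mod_three (m : ℕ) : (((2 ^ m : ℤ) : ZMod 3)) = (-1 : ZMod 3) ^ m := by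
  push_cast
  norm_num
  rw [(by decide : (2 : ZMod 3) = -1)]

open Finset in
theorem gauss_sum_cubic_char {F : Type*} [Field F] [Fintype F] [DecidableEq F]
    (m : ℕ) (hm : 1 ≤ m) (hcard : Fintype.card F = 2 ^ (2 * m))
    (χ : MulChar F ℂ) (hχ3 : χ ^ 3 = 1) (hχ : χ ≠ 1) :
    ∑ y : F, χ y * (if fieldTrace (2 * m) y = 0 then (1 : ℂ) else -1) = -(-2 : ℂ) ^ m := by
  haveI : CharP F 2 := char_two_of_card m hm hcard
  -- the additive character
  set ψ : AddChar F ℂ :=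
    { toFun := fun y => if fieldTrace (2 * m) y = 0 then (1 : ℂ) else -1
      map_zero_eq_one' := by simp [fieldTrace_zero]
      map_add_eq_mul' := by
        intro x y
        rw [fieldTrace_add]
        rcases fieldTrace_zero_or_one m hcard x with h1 | h1 <;>
          rcases fieldTrace_zero_or_one m hcard y with h2 | h2 <;>
          simp [h1, h2, CharTwo.add_self_eq_zero (1 : F)] } with hψdef
  have hψapp : ∀ y : F, ψ y = if fieldTrace (2 * m) y = 0 then (1 : ℂ) else -1 :=
    fun y => rfl
  have hψne : ψ ≠ 1 := by
    obtain ⟨x, hx⟩ := fieldTrace_exists_ne_zero (F := F) m hm hcard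
    intro h
    have : ψ x = 1 := by rw [h]; rfl
    rw [hψapp, if_neg hx] at this
    norm_num at this
  have hψne0 : ψ ≠ 0 := hψne
  have hprim : ψ.IsPrimitive := AddChar.IsPrimitive.of_ne_one hψne
  set g : ℂ := gaussSum χ ψ with hgdef
  have hgoal : ∑ y : F, χ y * (if fieldTrace (2 * m) y = 0 then (1 : ℂ) else -1)
      = g := by
    rw [hgdef, gaussSum]
    exact Finset.sum_congr rfl fun y _ => by rw [hψapp]
  -- basic character facts
  have hχ0 : χ 0 = 0 := MulChar.map_zero χ
  have hχcube : ∀ y : F, y ≠ 0 → (χ y) ^ 3 = 1 := by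
    intro y hy
    rw [← MulChar.pow_apply' χ (by norm_num) y, hχ3,
      MulChar.one_apply (isUnit_iff_ne_zero.mpr hy)]
  -- g^2 = card
  have hinv : χ⁻¹ = χ ^ 2 := by
    have h1 : χ * χ ^ 2 = 1 := by rw [← pow_succ']; exact hχ3
    exact inv_eq_of_mul_eq_one_right h1
  have hψinv : ψ⁻¹ = ψ := by
    apply DFunLike.ext
    intro x
    rw [AddChar.inv_apply, CharTwo.neg_eq]
  have hgg : gaussSum (χ ^ 2) ψ = g := by
    rw [hgdef, gaussSum, gaussSum]
    refine (Fintype.sum_bijective _ sq_bijective _ _ fun z => ?_).symm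
    have hψsq : ψ (z ^ 2) = ψ z := by
      rw [hψapp, hψapp, fieldTrace_sq m hcard]
    rw [hψsq, MulChar.pow_apply' χ (by norm_num), map_pow]
    by_cases hz : z = 0
    · simp [hz, hχ0]
    · have h3 : (χ z) ^ 3 = 1 := hχcube z hz
      have : ((χ z) ^ 2) ^ 2 = χ z := by
        calc ((χ z) ^ 2) ^ 2 = (χ z) ^ 3 * χ z := by ring
          _ = χ z := by rw [h3, one_mul]
      rw [this]
  have hg2 : g ^ 2 = (2 : ℂ) ^ (2 * m) := by
    have h := gaussSum_mul_gaussSum_eq_card hχ hprim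
    rw [hψinv, hinv, hgg, ← hgdef] at h
    rw [pow_two, h, hcard]
    push_cast
    ring
  -- decomposition over cube roots of unity
  set T : F → F := fieldTrace (2 * m) with hT
  set ψZ : F → ℤ := fun y => if T y = 0 then 1 else -1 with hψZ
  have hcast : ∀ y : F, ψ y = ((ψZ y : ℤ) : ℂ) := by
    intro y
    rw [hψapp, hψZ]
    split_ifs with h <;> simp [h]
  set A : Finset F := Finset.univ.filter fun y => χ y = 1 with hA
  set B : Finset F := Finset.univ.filter fun y => χ y = cubeOmega with hB
  set C : Finset F := Finset.univ.filter fun y => χ y = cubeOmega ^ 2 with hC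
  set a : ℤ := ∑ y ∈ A, ψZ y with ha
  set b : ℤ := ∑ y ∈ B, ψZ y with hb
  set c : ℤ := ∑ y ∈ C, ψZ y with hc
  -- sum of psi is zero
  have hsumψ : ∑ y : F, ψ y = 0 := AddChar.sum_eq_zero_iff_ne_zero.mpr hψne0
  have hsumZ : ∑ y : F, ψZ y = 0 := by
    have h0 : ((∑ y : F, ψZ y : ℤ) : ℂ) = 0 := by
      push_cast
      rw [← hsumψ]
      exact Finset.sum_congr rfl fun y _ => (hcast y).symm
    exact_mod_cast h0
  -- partition identity
  have hψZ0 : ψZ 0 = 1 := by rw [hψZ]; simp [hT, fieldTrace_zero]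
  have habc : 1 + (a + (b + c)) = 0 := by
    have hpt : ∀ y : F, ψZ y = (if y = 0 then ψZ y else 0) +
        ((if χ y = 1 then ψZ y else 0) +
          ((if χ y = cubeOmega then ψZ y else 0) +
            (if χ y = cubeOmega ^ 2 then ψZ y else 0))) := by
      intro y
      by_cases h0 : y = 0
      · rw [if_pos h0, h0, hχ0, if_neg (by exact fun h => zero_ne_one h),
          if_neg (fun h => cubeOmega_ne_zero h.symm),
          if_neg (fun h => (pow_ne_zero 2 cubeOmega_ne_zero) h.symm)]
        ring
      · rw [if_neg h0]
        rcases cube_root_cases (hχcube y h0) with h | h | h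
        · rw [h, if_pos rfl, if_neg (fun hh => cubeOmega_ne_one hh.symm),
            if_neg (fun hh => cubeOmega_sq_ne_one hh.symm)]
          ring
        · rw [h, if_neg cubeOmega_ne_one, if_pos rfl, if_neg cubeOmega_ne_sq]
          ring
        · rw [h, if_neg cubeOmega_sq_ne_one, if_neg (fun hh => cubeOmega_ne_sq hh.symm),
            if_pos rfl]
          ring
    have := Finset.sum_congr rfl fun y (_ : y ∈ Finset.univ) => hpt y
    rw [hsumZ] at this
    rw [Finset.sum_add_distrib, Finset.sum_add_distrib, Finset.sum_add_distrib,
      Finset.sum_ite_eq' Finset.univ (0 : F) ψZ] at this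
    simp only [Finset.mem_univ, if_true, hψZ0] at this
    rw [← Finset.sum_filter, ← Finset.sum_filter, ← Finset.sum_filter] at this
    rw [← hA, ← hB, ← hC, ← ha, ← hb, ← hc] at this
    omega
  -- c = b via squaring
  have hψZsq : ∀ y : F, ψZ (y ^ 2) = ψZ y := by
    intro y; rw [hψZ]; simp only [hT, fieldTrace_sq m hcard]
  have hcb : b = c := by
    rw [hb, hc]
    refine Finset.sum_bij (fun y _ => y ^ 2) ?_ ?_ ?_ ?_
    · intro y hy
      rw [hB, Finset.mem_filter] at hy
      rw [hC, Finset.mem_filter]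
      refine ⟨Finset.mem_univ _, ?_⟩
      show χ (y ^ 2) = cubeOmega ^ 2
      rw [map_pow, hy.2]
    · intro x hx y hy hxy
      exact sq_bijective.1 hxy
    · intro z hz
      rw [hC, Finset.mem_filter] at hz
      obtain ⟨y, hy0⟩ := sq_bijective.2 z
      have hy : y ^ 2 = z := hy0
      refine ⟨y, ?_, hy⟩
      rw [hB, Finset.mem_filter]
      refine ⟨Finset.mem_univ _, ?_⟩
      have hzne : z ≠ 0 := by
        intro h
        rw [h, hχ0] at hz
        exact (pow_ne_zero 2 cubeOmega_ne_zero) hz.2.symm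
      have hyne : y ≠ 0 := by
        intro h
        rw [h] at hy
        simp at hy
        exact hzne hy.symm
      have hy2 : (χ y) ^ 2 = cubeOmega ^ 2 := by rw [← map_pow, hy, hz.2]
      rcases cube_root_cases (hχcube y hyne) with h | h | h
      · rw [h, one_pow] at hy2
        exact absurd hy2.symm cubeOmega_sq_ne_one
      · exact h
      · rw [h] at hy2
        have h4 : cubeOmega ^ 4 = cubeOmega := by
          calc cubeOmega ^ 4 = cubeOmega ^ 3 * cubeOmega := by ring
            _ = cubeOmega := by rw [cubeOmega_cube, one_mul]
        rw [← pow_mul] at hy2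
        norm_num at hy2
        rw [h4] at hy2
        exact absurd hy2 cubeOmega_ne_sq
    · intro y hy
      exact (hψZsq y).symm
  -- g = a - b
  have hgab : g = ((a - b : ℤ) : ℂ) := by
    have hdec : ∀ y : F, χ y * ψ y = (if χ y = 1 then ((ψZ y : ℤ) : ℂ) else 0) +
        (cubeOmega * (if χ y = cubeOmega then ((ψZ y : ℤ) : ℂ) else 0) +
          cubeOmega ^ 2 * (if χ y = cubeOmega ^ 2 then ((ψZ y : ℤ) : ℂ) else 0)) := by
      intro y
      by_cases h0 : y = 0
      · rw [h0, hχ0, if_neg (fun h => zero_ne_one h),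
          if_neg (fun h => cubeOmega_ne_zero h.symm),
          if_neg (fun h => (pow_ne_zero 2 cubeOmega_ne_zero) h.symm)]
        ring
      · rw [hcast]
        rcases cube_root_cases (hχcube y h0) with h | h | h
        · rw [h, if_pos rfl, if_neg (fun hh => cubeOmega_ne_one hh.symm),
            if_neg (fun hh => cubeOmega_sq_ne_one hh.symm)]
          ring
        · rw [h, if_neg cubeOmega_ne_one, if_pos rfl, if_neg cubeOmega_ne_sq]
          ring
        · rw [h, if_neg cubeOmega_sq_ne_one, if_neg (fun hh => cubeOmega_ne_sq hh.symm),
            if_pos rfl]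
          ring
    have hsum : g = ((a : ℤ) : ℂ) + (cubeOmega * ((b : ℤ) : ℂ) +
        cubeOmega ^ 2 * ((c : ℤ) : ℂ)) := by
      rw [hgdef, gaussSum]
      rw [Finset.sum_congr rfl fun y (_ : y ∈ Finset.univ) => hdec y]
      rw [Finset.sum_add_distrib, Finset.sum_add_distrib, ← Finset.mul_sum, ← Finset.mul_sum]
      rw [← Finset.sum_filter, ← Finset.sum_filter, ← Finset.sum_filter]
      rw [← hA, ← hB, ← hC, ha, hb, hc]
      push_cast
      ring
    rw [hsum, ← hcb]
    push_cast
    linear_combination ((b : ℤ) : ℂ) * cubeOmega_sum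
  -- integer endgame
  set n : ℤ := a - b with hn
  have hn2 : n ^ 2 = 2 ^ (2 * m) := by
    have : ((n ^ 2 : ℤ) : ℂ) = ((2 ^ (2 * m) : ℤ) : ℂ) := by
      push_cast
      rw [← hgab]
      exact hg2
    exact_mod_cast this
  have hnmod : n = -1 - 3 * b := by omega
  have hfact : (n - 2 ^ m) * (n + 2 ^ m) = 0 := by
    have h2m : (2 : ℤ) ^ (2 * m) = (2 ^ m) ^ 2 := by
      rw [← pow_mul, mul_comm]
    linear_combination hn2 - h2m
  have h30 : (3 : ZMod 3) = 0 := by decide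
  have hn3 : ((n : ZMod 3)) = -1 := by
    rw [hnmod]
    push_cast
    rw [h30]
    ring
  have hfin : n = -(-2 : ℤ) ^ m := by
    rcases mul_eq_zero.mp hfact with h | h
    · -- n = 2^m
      have hne : n = 2 ^ m := by linarith [sub_eq_zero.mp h]
      rcases Nat.even_or_odd m with hpar | hpar
      · exfalso
        rw [hne] at hn3
        rw [int_pow_two_mod_three, hpar.neg_one_pow] at hn3
        exact absurd hn3 (by decide)
      · rw [hne, Odd.neg_pow hpar, neg_neg]
    · -- n = -2^m
      have hne : n = -(2 ^ m) := by linarith [add_eq_zero_iff_eq_neg.mp h]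
      rcases Nat.even_or_odd m with hpar | hpar
      · rw [hne, Even.neg_pow hpar]
      · exfalso
        rw [hne] at hn3
        rw [Int.cast_neg, int_pow_two_mod_three, hpar.neg_one_pow, neg_neg] at hn3
        exact absurd hn3 (by decide)
  rw [hgoal, hgab, hfin]
  push_cast
  ring
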